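/- arXiv:2505.14033 — 2 statements merged into one kernel-verified Lean document; each statement's English description precedes it below -/
import Mathlib

section
/- Let n ≥ 1, let L ∈ ℝ^{n×n} be symmetric positive semidefinite such that 2I − L is also positive semidefinite, and set Δ = L − I. Let Π ∈ ℝ^{n×n}, and let ε, M, B ≥ 0. Assume that for every y ∈ ℝⁿ: (i) ‖Δy − ΠΔΠy‖_L ≤ ε·M·‖y‖_L, and (ii) ‖ΠΔΠy‖_L ≤ B·‖y‖_L. Then for every integer k ≥ 0 and every x ∈ ℝⁿ, ‖Δᵏx − (ΠΔΠ)ᵏx‖_L ≤ ε·M·‖x‖_L·(∑_{j=0}^{k−1} Bʲ). -/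
open Matrix

/-- The semi-norm induced by a positive semidefinite matrix `L`:
`‖x‖_L = √(xᵀ L x)`. -/
noncomputable def semiNormL {n : ℕ} (L : Matrix (Fin n) (Fin n) ℝ) (x : Fin n → ℝ) : ℝ :=
  Real.sqrt (x ⬝ᵥ (L *ᵥ x))

/-!
Write `Q = ΠΔΠ`. Since `L` commutes with `Δ = L - I`, `L - ΔLΔ = L(2I - L)L ⪰ 0`, so `Δ` is a
contraction for `‖·‖_L`. Then `Δᵏ⁺¹x - Qᵏ⁺¹x = (Δ - Q)Δᵏx + Q(Δᵏx - Qᵏx)`: the first term costs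
at most `εM‖x‖_L` and the second multiplies the previous error by at most `B`, which sums to the
geometric series.
-/

open Finset

section

variable {ι R : Type*} [Fintype ι] [DecidableEq ι] [Ring R] (N : AddGroupSeminorm (ι → R))
  {A Q : Matrix ι ι R}

lemma AddGroupSeminorm.pow_mulVec_le (hA : ∀ y, N (A *ᵥ y) ≤ N y) (k : ℕ) (y : ι → R) :
    N (A ^ k *ᵥ y) ≤ N y := by
  induction k with
  | zero => simp
  | succ k ih => rw [pow_succ', ← mulVec_mulVec]; exact (hA _).trans ih

lemma AddGroupSeminorm.pow_mulVec_sub_pow_mulVec_le {c B : ℝ} (hc : 0 ≤ c) (hB : 0 ≤ B)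
    (hA : ∀ y, N (A *ᵥ y) ≤ N y) (hAQ : ∀ y, N (A *ᵥ y - Q *ᵥ y) ≤ c * N y)
    (hQ : ∀ y, N (Q *ᵥ y) ≤ B * N y) (k : ℕ) (x : ι → R) :
    N (A ^ k *ᵥ x - Q ^ k *ᵥ x) ≤ c * N x * ∑ j ∈ range k, B ^ j := by
  induction k with
  | zero => simp
  | succ k ih =>
    set y := A ^ k *ᵥ x
    have hsplit : A ^ (k + 1) *ᵥ x - Q ^ (k + 1) *ᵥ x
        = (A *ᵥ y - Q *ᵥ y) + Q *ᵥ (y - Q ^ k *ᵥ x) := by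
      rw [pow_succ', pow_succ', ← mulVec_mulVec, ← mulVec_mulVec, mulVec_sub]
      abel
    calc N (A ^ (k + 1) *ᵥ x - Q ^ (k + 1) *ᵥ x)
        ≤ N (A *ᵥ y - Q *ᵥ y) + N (Q *ᵥ (y - Q ^ k *ᵥ x)) := hsplit ▸ map_add_le_add N _ _
      _ ≤ c * N y + B * N (y - Q ^ k *ᵥ x) := add_le_add (hAQ y) (hQ _)
      _ ≤ c * N x + B * (c * N x * ∑ j ∈ range k, B ^ j) := by
        gcongr
        exact N.pow_mulVec_le hA k x
      _ = c * N x * ∑ j ∈ range (k + 1), B ^ j := by rw [geom_sum_succ]; ring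

end

lemma dotProduct_conjTranspose_mul_mul_mulVec {ι R : Type*} [Fintype ι] [CommSemiring R]
    [StarRing R] [TrivialStar R] (A B : Matrix ι ι R) (y : ι → R) :
    y ⬝ᵥ ((Aᴴ * B * A) *ᵥ y) = (A *ᵥ y) ⬝ᵥ (B *ᵥ (A *ᵥ y)) := by
  rw [← mulVec_mulVec, ← mulVec_mulVec, dotProduct_mulVec, conjTranspose_eq_transpose_of_trivial,
    vecMul_transpose]

namespace Matrix.PosSemidef

variable {n : ℕ} {L : Matrix (Fin n) (Fin n) ℝ}

noncomputable def addGroupSeminorm (hL : L.PosSemidef) : AddGroupSeminorm (Fin n → ℝ) :=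
  @normAddGroupSeminorm _ (L.toSeminormedAddCommGroup hL).toSeminormedAddGroup

lemma coe_addGroupSeminorm (hL : L.PosSemidef) : ⇑hL.addGroupSeminorm = semiNormL L := by
  ext x
  rw [semiNormL, dotProduct_comm]
  rfl

end Matrix.PosSemidef

lemma semiNormL_sub_one_mulVec_le {n : ℕ} {L : Matrix (Fin n) (Fin n) ℝ} (hL : L.IsHermitian)
    (hL2 : ((2 : ℝ) • (1 : Matrix (Fin n) (Fin n) ℝ) - L).PosSemidef) (y : Fin n → ℝ) :
    semiNormL L ((L - 1) *ᵥ y) ≤ semiNormL L y := by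
  have hsplit : (L - 1)ᴴ * L * (L - 1) + Lᴴ * ((2 : ℝ) • 1 - L) * L = L := by
    rw [conjTranspose_sub, conjTranspose_one, hL.eq, two_smul]
    noncomm_ring
  have hnonneg := (hL2.conjTranspose_mul_mul_same L).dotProduct_mulVec_nonneg y
  rw [star_trivial] at hnonneg
  apply Real.sqrt_le_sqrt
  calc (L - 1) *ᵥ y ⬝ᵥ (L *ᵥ ((L - 1) *ᵥ y))
      ≤ (L - 1) *ᵥ y ⬝ᵥ (L *ᵥ ((L - 1) *ᵥ y)) + y ⬝ᵥ ((Lᴴ * ((2 : ℝ) • 1 - L) * L) *ᵥ y) :=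
        le_add_of_nonneg_right hnonneg
    _ = y ⬝ᵥ (L *ᵥ y) := by
        rw [← dotProduct_conjTranspose_mul_mul_mulVec, ← dotProduct_add, ← add_mulVec, hsplit]

theorem stmt_1_general {n : ℕ}
    (L : Matrix (Fin n) (Fin n) ℝ)
    (hL : L.PosSemidef)
    (hL2 : ((2 : ℝ) • (1 : Matrix (Fin n) (Fin n) ℝ) - L).PosSemidef)
    (Δ : Matrix (Fin n) (Fin n) ℝ) (hΔ : Δ = L - 1)
    (P : Matrix (Fin n) (Fin n) ℝ)
    (ε M B : ℝ) (hε : 0 ≤ ε) (hM : 0 ≤ M) (hB : 0 ≤ B)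
    (h1 : ∀ y : Fin n → ℝ,
      semiNormL L (Δ *ᵥ y - (P * Δ * P) *ᵥ y) ≤ ε * M * semiNormL L y)
    (h2 : ∀ y : Fin n → ℝ,
      semiNormL L ((P * Δ * P) *ᵥ y) ≤ B * semiNormL L y) :
    ∀ k : ℕ, ∀ x : Fin n → ℝ,
      semiNormL L ((Δ ^ k) *ᵥ x - ((P * Δ * P) ^ k) *ᵥ x)
        ≤ ε * M * semiNormL L x * (∑ j ∈ Finset.range k, B ^ j) := by
  have hΔ_contr : ∀ y, semiNormL L (Δ *ᵥ y) ≤ semiNormL L y :=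
    hΔ ▸ semiNormL_sub_one_mulVec_le hL.isHermitian hL2
  rw [← hL.coe_addGroupSeminorm] at h1 h2 hΔ_contr ⊢
  exact hL.addGroupSeminorm.pow_mulVec_sub_pow_mulVec_le (mul_nonneg hε hM) hB hΔ_contr h1 h2

theorem stmt_1 {n : ℕ} (hn : 1 ≤ n)
    (L : Matrix (Fin n) (Fin n) ℝ)
    (hL : L.PosSemidef)
    (hL2 : ((2 : ℝ) • (1 : Matrix (Fin n) (Fin n) ℝ) - L).PosSemidef)
    (Δ : Matrix (Fin n) (Fin n) ℝ) (hΔ : Δ = L - 1)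
    (P : Matrix (Fin n) (Fin n) ℝ)
    (ε M B : ℝ) (hε : 0 ≤ ε) (hM : 0 ≤ M) (hB : 0 ≤ B)
    (h1 : ∀ y : Fin n → ℝ,
      semiNormL L (Δ *ᵥ y - (P * Δ * P) *ᵥ y) ≤ ε * M * semiNormL L y)
    (h2 : ∀ y : Fin n → ℝ,
      semiNormL L ((P * Δ * P) *ᵥ y) ≤ B * semiNormL L y) :
    ∀ k : ℕ, ∀ x : Fin n → ℝ,
      semiNormL L ((Δ ^ k) *ᵥ x - ((P * Δ * P) ^ k) *ᵥ x)
        ≤ ε * M * semiNormL L x * (∑ j ∈ Finset.range k, B ^ j) :=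
  stmt_1_general L hL hL2 Δ hΔ P ε M B hε hM hB h1 h2
end

section
/- Let n ≥ 1, let L ∈ ℝ^{n×n} be symmetric positive semidefinite such that 2I − L is also positive semidefinite, and set Δ = L − I. Let M, B ≥ 0 be fixed, let (Π_m)_{m∈ℕ} be a sequence of matrices in ℝ^{n×n} and (ε_m)_{m∈ℕ} a sequence of nonnegative reals with ε_m → 0, such that for every m and every y ∈ ℝⁿ: ‖Δy − Π_mΔΠ_m y‖_L ≤ ε_m·M·‖y‖_L and ‖Π_mΔΠ_m y‖_L ≤ B·‖y‖_L. Then for every integer k ≥ 0 and every x ∈ ℝⁿ, ‖Δᵏx − (Π_mΔΠ_m)ᵏx‖_L → 0 as m → ∞. -/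
open Matrix Filter

/-
Writing `‖x‖_L = ‖√L x‖₂` makes `‖·‖_L` a seminorm. The hypotheses `L ⪰ 0` and `2I - L ⪰ 0`
give `L - ΔLΔ = L(2I - L)L ⪰ 0`, i.e. `Δ` is a contraction for `‖·‖_L`. Then
`Δᵏ⁺¹x - Qᵏ⁺¹x = Δ(Δᵏx - Qᵏx) + (Δ - Q)Qᵏx` with `Q = ΠΔΠ`, so the error at step `k + 1` is
at most the error at step `k` plus `ε M Bᵏ ‖x‖_L`, and induction on `k` concludes.
-/

namespace Matrix

variable {n : ℕ} {L : Matrix (Fin n) (Fin n) ℝ}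

section semiNormL

open scoped MatrixOrder

theorem semiNormL_eq_norm_sqrt_mulVec (hL : L.PosSemidef) (x : Fin n → ℝ) :
    semiNormL L x = ‖WithLp.toLp 2 (CFC.sqrt L *ᵥ x)‖ := by
  set S := CFC.sqrt L
  have hS : S * S = L := CFC.sqrt_mul_sqrt_self L hL.nonneg
  have hST : Sᵀ = S := by
    rw [← conjTranspose_eq_transpose_of_trivial]
    exact (CFC.sqrt_nonneg L).posSemidef.isHermitian
  rw [norm_eq_sqrt_real_inner, EuclideanSpace.inner_toLp_toLp, semiNormL, ← hS,
    ← mulVec_mulVec, dotProduct_mulVec, ← hST, vecMul_transpose, hST, star_trivial]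

theorem semiNormL_add_le (hL : L.PosSemidef) (x y : Fin n → ℝ) :
    semiNormL L (x + y) ≤ semiNormL L x + semiNormL L y := by
  simp only [semiNormL_eq_norm_sqrt_mulVec hL, mulVec_add, WithLp.toLp_add]
  exact norm_add_le _ _

end semiNormL

@[simp]
theorem semiNormL_zero : semiNormL L 0 = 0 := by
  simp [semiNormL]

theorem semiNormL_mulVec_le_of_posSemidef (A : Matrix (Fin n) (Fin n) ℝ)
    (hA : (L - Aᵀ * L * A).PosSemidef) (y : Fin n → ℝ) :
    semiNormL L (A *ᵥ y) ≤ semiNormL L y := by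
  apply Real.sqrt_le_sqrt
  have hform := hA.dotProduct_mulVec_nonneg y
  rw [star_trivial, sub_mulVec, dotProduct_sub, ← mulVec_mulVec, ← mulVec_mulVec,
    dotProduct_mulVec y Aᵀ, vecMul_transpose] at hform
  linarith

theorem semiNormL_pow_mulVec_le (Q : Matrix (Fin n) (Fin n) ℝ) {B : ℝ} (hB : 0 ≤ B)
    (hQ : ∀ y, semiNormL L (Q *ᵥ y) ≤ B * semiNormL L y) (k : ℕ) (x : Fin n → ℝ) :
    semiNormL L ((Q ^ k) *ᵥ x) ≤ B ^ k * semiNormL L x := by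
  induction k with
  | zero => simp
  | succ k ih =>
    calc semiNormL L ((Q ^ (k + 1)) *ᵥ x) = semiNormL L (Q *ᵥ ((Q ^ k) *ᵥ x)) := by
          rw [pow_succ', mulVec_mulVec]
      _ ≤ B * (B ^ k * semiNormL L x) := (hQ _).trans (mul_le_mul_of_nonneg_left ih hB)
      _ = B ^ (k + 1) * semiNormL L x := by ring

theorem semiNormL_pow_succ_mulVec_sub_le (hL : L.PosSemidef) {A : Matrix (Fin n) (Fin n) ℝ}
    (hA : ∀ y, semiNormL L (A *ᵥ y) ≤ semiNormL L y) (Q : Matrix (Fin n) (Fin n) ℝ) (k : ℕ)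
    (x : Fin n → ℝ) :
    semiNormL L ((A ^ (k + 1)) *ᵥ x - (Q ^ (k + 1)) *ᵥ x) ≤
      semiNormL L ((A ^ k) *ᵥ x - (Q ^ k) *ᵥ x) +
        semiNormL L (A *ᵥ ((Q ^ k) *ᵥ x) - Q *ᵥ ((Q ^ k) *ᵥ x)) := by
  have hsplit : (A ^ (k + 1)) *ᵥ x - (Q ^ (k + 1)) *ᵥ x =
      A *ᵥ ((A ^ k) *ᵥ x - (Q ^ k) *ᵥ x) + (A *ᵥ ((Q ^ k) *ᵥ x) - Q *ᵥ ((Q ^ k) *ᵥ x)) := by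
    rw [pow_succ', pow_succ', ← mulVec_mulVec, ← mulVec_mulVec, mulVec_sub]
    abel
  rw [hsplit]
  exact (semiNormL_add_le hL _ _).trans (add_le_add_left (hA _) _)

theorem tendsto_semiNormL_pow_mulVec_sub (hL : L.PosSemidef) {A : Matrix (Fin n) (Fin n) ℝ}
    (hA : ∀ y, semiNormL L (A *ᵥ y) ≤ semiNormL L y) (Q : ℕ → Matrix (Fin n) (Fin n) ℝ)
    {δ : ℕ → ℝ} (hδ : ∀ m, 0 ≤ δ m) (hδlim : Tendsto δ atTop (nhds 0))
    (happrox : ∀ m y, semiNormL L (A *ᵥ y - Q m *ᵥ y) ≤ δ m * semiNormL L y)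
    {B : ℝ} (hB : 0 ≤ B) (hQ : ∀ m y, semiNormL L (Q m *ᵥ y) ≤ B * semiNormL L y)
    (k : ℕ) (x : Fin n → ℝ) :
    Tendsto (fun m => semiNormL L ((A ^ k) *ᵥ x - (Q m ^ k) *ᵥ x)) atTop (nhds 0) := by
  induction k with
  | zero => simp
  | succ k ih =>
    have hbound : Tendsto (fun m => semiNormL L ((A ^ k) *ᵥ x - (Q m ^ k) *ᵥ x) +
        δ m * (B ^ k * semiNormL L x)) atTop (nhds 0) := by
      simpa using ih.add (hδlim.mul_const (B ^ k * semiNormL L x))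
    refine squeeze_zero (fun m => Real.sqrt_nonneg _) (fun m => ?_) hbound
    refine (semiNormL_pow_succ_mulVec_sub_le hL hA (Q m) k x).trans (add_le_add_right ?_ _)
    exact (happrox m _).trans
      (mul_le_mul_of_nonneg_left (semiNormL_pow_mulVec_le (Q m) hB (hQ m) k x) (hδ m))

end Matrix

theorem stmt_2_general {n : ℕ}
    (L : Matrix (Fin n) (Fin n) ℝ)
    (hL : L.PosSemidef)
    (hL2 : ((2 : ℝ) • (1 : Matrix (Fin n) (Fin n) ℝ) - L).PosSemidef)
    (Δ : Matrix (Fin n) (Fin n) ℝ) (hΔ : Δ = L - 1)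
    (M B : ℝ) (hM : 0 ≤ M) (hB : 0 ≤ B)
    (P : ℕ → Matrix (Fin n) (Fin n) ℝ)
    (ε : ℕ → ℝ) (hε : ∀ m, 0 ≤ ε m)
    (hεlim : Tendsto ε atTop (nhds 0))
    (h1 : ∀ m, ∀ y : Fin n → ℝ,
      semiNormL L (Δ *ᵥ y - (P m * Δ * P m) *ᵥ y) ≤ ε m * M * semiNormL L y)
    (h2 : ∀ m, ∀ y : Fin n → ℝ,
      semiNormL L ((P m * Δ * P m) *ᵥ y) ≤ B * semiNormL L y) :
    ∀ k : ℕ, ∀ x : Fin n → ℝ,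
      Tendsto (fun m => semiNormL L ((Δ ^ k) *ᵥ x - ((P m * Δ * P m) ^ k) *ᵥ x))
        atTop (nhds 0) := by
  have hLT : Lᵀ = L := by
    rw [← conjTranspose_eq_transpose_of_trivial]
    exact hL.isHermitian
  have hcontraction : (L - Δᵀ * L * Δ).PosSemidef := by
    have hfactor : L - Δᵀ * L * Δ = Lᴴ * ((2 : ℝ) • 1 - L) * L := by
      rw [hΔ, transpose_sub, transpose_one, conjTranspose_eq_transpose_of_trivial, hLT,
        two_smul]
      noncomm_ring
    rw [hfactor]
    exact hL2.conjTranspose_mul_mul_same L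
  have hεM : Tendsto (fun m => ε m * M) atTop (nhds 0) := by
    simpa using hεlim.mul_const M
  exact tendsto_semiNormL_pow_mulVec_sub hL (semiNormL_mulVec_le_of_posSemidef Δ hcontraction)
    (fun m => P m * Δ * P m) (fun m => mul_nonneg (hε m) hM) hεM h1 hB h2

theorem stmt_2 {n : ℕ} (hn : 1 ≤ n)
    (L : Matrix (Fin n) (Fin n) ℝ)
    (hL : L.PosSemidef)
    (hL2 : ((2 : ℝ) • (1 : Matrix (Fin n) (Fin n) ℝ) - L).PosSemidef)
    (Δ : Matrix (Fin n) (Fin n) ℝ) (hΔ : Δ = L - 1)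
    (M B : ℝ) (hM : 0 ≤ M) (hB : 0 ≤ B)
    (P : ℕ → Matrix (Fin n) (Fin n) ℝ)
    (ε : ℕ → ℝ) (hε : ∀ m, 0 ≤ ε m)
    (hεlim : Tendsto ε atTop (nhds 0))
    (h1 : ∀ m, ∀ y : Fin n → ℝ,
      semiNormL L (Δ *ᵥ y - (P m * Δ * P m) *ᵥ y) ≤ ε m * M * semiNormL L y)
    (h2 : ∀ m, ∀ y : Fin n → ℝ,
      semiNormL L ((P m * Δ * P m) *ᵥ y) ≤ B * semiNormL L y) :
    ∀ k : ℕ, ∀ x : Fin n → ℝ,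
      Tendsto (fun m => semiNormL L ((Δ ^ k) *ᵥ x - ((P m * Δ * P m) ^ k) *ᵥ x))
        atTop (nhds 0) :=
  stmt_2_general L hL hL2 Δ hΔ M B hM hB P ε hε hεlim h1 h2
end
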